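/- For every integer k ≥ 4, there exists a k-uniform hypergraph on exactly k+2 vertices whose only automorphism is the identity. -/
import Mathlib


/-- An automorphism of a hypergraph `(X, M)`: a permutation of the ambient type that
fixes every vertex outside `X` (so it is essentially a permutation of `X`) and
preserves the edge set `M`. -/
def IsAuto {V : Type*} [DecidableEq V] (X : Finset V) (M : Finset (Finset V))
    (σ : Equiv.Perm V) : Prop :=
  (∀ v ∉ X, σ v = v) ∧ ∀ E : Finset V, E ∈ M ↔ E.image σ ∈ M

/-- Directed adjacency on vertex labels: the path `x → x+1`, plus `0 → y` for `y ≥ 3`. -/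
def AsymR (x y : ℕ) : Prop := y = x + 1 ∨ (x = 0 ∧ 3 ≤ y)

instance (x y : ℕ) : Decidable (AsymR x y) := by unfold AsymR; infer_instance

lemma AsymR.ne {x y : ℕ} (h : AsymR x y) : x ≠ y := by unfold AsymR at h; omega

/-- The hypergraph: complements of the (pair) edges of the graph given by `AsymR`. -/
def asymM (n : ℕ) : Finset (Finset (Fin n)) :=
  (Finset.univ.filter (fun p : Fin n × Fin n => AsymR p.1.val p.2.val)).image
    (fun p => ({p.1, p.2} : Finset (Fin n))ᶜ)

lemma image_compl_perm {V : Type*} [DecidableEq V] [Fintype V] (σ : Equiv.Perm V)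
    (s : Finset V) : (sᶜ).image σ = (s.image σ)ᶜ := by
  ext x
  simp only [Finset.mem_image, Finset.mem_compl]
  constructor
  · rintro ⟨y, hy, rfl⟩ ⟨z, hz, hzy⟩
    exact hy (σ.injective hzy ▸ hz)
  · intro h
    refine ⟨σ.symm x, fun hs => h ⟨σ.symm x, hs, by simp⟩, by simp⟩

lemma mem_asymM {n : ℕ} {a b : Fin n} (hab : a ≠ b) :
    ({a, b} : Finset (Fin n))ᶜ ∈ asymM n ↔ (AsymR a.val b.val ∨ AsymR b.val a.val) := by
  simp only [asymM, Finset.mem_image, Finset.mem_filter, Finset.mem_univ, true_and]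
  constructor
  · rintro ⟨p, hp, heq⟩
    rw [compl_inj_iff] at heq
    have h1 : p.1 ∈ ({a, b} : Finset (Fin n)) := heq ▸ (by simp)
    have h2 : p.2 ∈ ({a, b} : Finset (Fin n)) := heq ▸ (by simp)
    have hne : p.1 ≠ p.2 := fun h => hp.ne (by rw [h])
    simp only [Finset.mem_insert, Finset.mem_singleton] at h1 h2
    rcases h1 with h1 | h1 <;> rcases h2 with h2 | h2 <;>
      first
      | (left; rw [← h1, ← h2]; exact hp)
      | (right; rw [← h1, ← h2]; exact hp)
      | (exact absurd (by rw [h1, h2]) hne)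
  · rintro (h | h)
    · exact ⟨(a, b), h, rfl⟩
    · exact ⟨(b, a), h, by rw [compl_inj_iff, Finset.pair_comm]⟩

/-- For every k ≥ 4, there exists a k-uniform hypergraph on exactly k+2 vertices
whose only automorphism is the identity. -/
theorem stmt_4 (k : ℕ) (hk : 4 ≤ k) :
    ∃ M : Finset (Finset (Fin (k + 2))), (∀ E ∈ M, E.card = k) ∧
      ∀ σ : Equiv.Perm (Fin (k + 2)), IsAuto Finset.univ M σ → σ = 1 := by
  have hn : 6 ≤ k + 2 := by omega
  refine ⟨asymM (k + 2), ?_, ?_⟩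
  · intro E hE
    simp only [asymM, Finset.mem_image, Finset.mem_filter, Finset.mem_univ, true_and] at hE
    obtain ⟨p, hp, rfl⟩ := hE
    have hne : p.1 ≠ p.2 := fun h => hp.ne (by rw [h])
    rw [Finset.card_compl, Finset.card_insert_of_notMem (by simp [hne]),
      Finset.card_singleton, Fintype.card_fin]
    omega
  · intro σ hσ
    -- the vertex `m` as an element of `Fin (k+2)`
    set f : ℕ → Fin (k + 2) := fun m => ⟨m % (k + 2), Nat.mod_lt _ (by omega)⟩ with hf
    have hfval : ∀ m, m < k + 2 → (f m).val = m := fun m hm => Nat.mod_eq_of_lt hm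
    have hfeq : ∀ m (hm : m < k + 2) (x : Fin (k + 2)), x.val = m → x = f m := by
      intro m hm x hx
      exact Fin.ext (by rw [hx, hfval m hm])
    -- symmetric adjacency relation
    have hRelNe : ∀ {a b : Fin (k + 2)},
        (AsymR a.val b.val ∨ AsymR b.val a.val) → a ≠ b := by
      rintro a b (h | h) hab
      · exact h.ne (by rw [hab])
      · exact h.ne (by rw [hab])
    -- σ preserves Rel, in both directions
    have key : ∀ a b : Fin (k + 2), (AsymR a.val b.val ∨ AsymR b.val a.val) →
        (AsymR (σ a).val (σ b).val ∨ AsymR (σ b).val (σ a).val) := by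
      intro a b hab
      have hne := hRelNe hab
      have h1 : ({a, b} : Finset (Fin (k + 2)))ᶜ ∈ asymM (k + 2) := (mem_asymM hne).2 hab
      have h2 := (hσ.2 _).1 h1
      rw [image_compl_perm, Finset.image_insert, Finset.image_singleton] at h2
      exact (mem_asymM (fun h => hne (σ.injective h))).1 h2
    have key' : ∀ a b : Fin (k + 2), (AsymR (σ a).val (σ b).val ∨ AsymR (σ b).val (σ a).val) →
        (AsymR a.val b.val ∨ AsymR b.val a.val) := by
      intro a b hab
      have hne : a ≠ b := fun h => hRelNe hab (by rw [h])
      have h1 : ({σ a, σ b} : Finset (Fin (k + 2)))ᶜ ∈ asymM (k + 2) :=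
        (mem_asymM (hRelNe hab)).2 hab
      rw [← Finset.image_singleton σ, ← Finset.image_insert, ← image_compl_perm] at h1
      exact (mem_asymM hne).1 ((hσ.2 _).2 h1)
    -- injectivity on values
    have hinj : ∀ a b : ℕ, a < k + 2 → b < k + 2 → a ≠ b →
        (σ (f a)).val ≠ (σ (f b)).val := by
      intro a b ha hb hab h
      exact hab (by
        have := σ.injective (Fin.ext h)
        have h2 := congrArg Fin.val this
        rwa [hfval a ha, hfval b hb] at h2)
    -- Rel between explicit labels
    have hRelf : ∀ a b : ℕ, a < k + 2 → b < k + 2 → AsymR a b →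
        (AsymR (f a).val (f b).val ∨ AsymR (f b).val (f a).val) := by
      intro a b ha hb h
      rw [hfval a ha, hfval b hb]
      exact Or.inl h
    -- step 1: σ 0 = 0
    have hσ0 : σ (f 0) = f 0 := by
      have h1 := key _ _ (hRelf 0 1 (by omega) (by omega) (Or.inl rfl))
      have h3 := key _ _ (hRelf 0 3 (by omega) (by omega) (Or.inr ⟨rfl, by omega⟩))
      have h4 := key _ _ (hRelf 0 4 (by omega) (by omega) (Or.inr ⟨rfl, by omega⟩))
      have h5 := key _ _ (hRelf 0 5 (by omega) (by omega) (Or.inr ⟨rfl, by omega⟩))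
      have d13 := hinj 1 3 (by omega) (by omega) (by omega)
      have d14 := hinj 1 4 (by omega) (by omega) (by omega)
      have d15 := hinj 1 5 (by omega) (by omega) (by omega)
      have d34 := hinj 3 4 (by omega) (by omega) (by omega)
      have d35 := hinj 3 5 (by omega) (by omega) (by omega)
      have d45 := hinj 4 5 (by omega) (by omega) (by omega)
      refine hfeq 0 (by omega) _ ?_
      unfold AsymR at h1 h3 h4 h5
      omega
    -- step 2: σ 2 = 2
    have hσ2 : σ (f 2) = f 2 := by
      have hnr : ¬ (AsymR (σ (f 0)).val (σ (f 2)).val ∨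
          AsymR (σ (f 2)).val (σ (f 0)).val) := by
        intro h
        have := key' _ _ h
        rw [hfval 0 (by omega), hfval 2 (by omega)] at this
        unfold AsymR at this
        omega
      rw [hσ0, hfval 0 (by omega)] at hnr
      have d02 := hinj 0 2 (by omega) (by omega) (by omega)
      rw [hσ0] at d02
      rw [hfval 0 (by omega)] at d02
      refine hfeq 2 (by omega) _ ?_
      unfold AsymR at hnr
      omega
    -- step 3: σ 3 = 3
    have hσ3 : σ (f 3) = f 3 := by
      have h23 := key _ _ (hRelf 2 3 (by omega) (by omega) (Or.inl rfl))
      rw [hσ2, hfval 2 (by omega)] at h23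
      -- (σ (f 3)).val ∈ {1, 3}
      have hval : (σ (f 3)).val = 1 ∨ (σ (f 3)).val = 3 := by
        unfold AsymR at h23; omega
      rcases hval with hval | hval
      · exfalso
        have h34 := key _ _ (hRelf 3 4 (by omega) (by omega) (Or.inl rfl))
        rw [hval] at h34
        have hv4 : (σ (f 4)).val = 0 ∨ (σ (f 4)).val = 2 := by
          unfold AsymR at h34; omega
        have d40 := hinj 4 0 (by omega) (by omega) (by omega)
        have d42 := hinj 4 2 (by omega) (by omega) (by omega)
        rw [hσ0, hfval 0 (by omega)] at d40
        rw [hσ2, hfval 2 (by omega)] at d42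
        omega
      · exact hfeq 3 (by omega) _ hval
    -- step 4: σ 1 = 1
    have hσ1 : σ (f 1) = f 1 := by
      have h21 := key _ _ (hRelf 1 2 (by omega) (by omega) (Or.inl rfl))
      rw [hσ2, hfval 2 (by omega)] at h21
      have d13 := hinj 1 3 (by omega) (by omega) (by omega)
      rw [hσ3, hfval 3 (by omega)] at d13
      refine hfeq 1 (by omega) _ ?_
      unfold AsymR at h21
      omega
    -- step 5: induction for m ≥ 2
    have main : ∀ m, m < k + 2 → 2 ≤ m → σ (f m) = f m := by
      intro m
      induction m using Nat.strong_induction_on with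
      | _ m ih =>
        intro hm h2
        rcases Nat.lt_or_ge m 4 with h4 | h4
        · interval_cases m
          · exact hσ2
          · exact hσ3
        · have ih1 : σ (f (m - 1)) = f (m - 1) := ih (m - 1) (by omega) (by omega) (by omega)
          have hstep := key _ _ (hRelf (m - 1) m (by omega) (by omega) (Or.inl (by omega)))
          rw [ih1, hfval (m - 1) (by omega)] at hstep
          have d0 := hinj m 0 (by omega) (by omega) (by omega)
          rw [hσ0, hfval 0 (by omega)] at d0
          have d2 := hinj m (m - 2) (by omega) (by omega) (by omega)
          rw [ih (m - 2) (by omega) (by omega) (by omega), hfval (m - 2) (by omega)] at d2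
          refine hfeq m (by omega) _ ?_
          unfold AsymR at hstep
          omega
    -- conclude
    ext x : 1
    have hx : x = f x.val := Fin.ext (hfval x.val x.isLt).symm
    rcases Nat.lt_or_ge x.val 2 with h2 | h2
    · rcases Nat.lt_or_ge x.val 1 with h1 | h1
      · have : x.val = 0 := by omega
        rw [hx, this]
        simpa using hσ0
      · have : x.val = 1 := by omega
        rw [hx, this]
        simpa using hσ1
    · rw [hx]
      simpa using main x.val x.isLt h2
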